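/- Among all trees on n ≥ 2 vertices, S_2(T) = Σ_v deg(v)^2 is maximized uniquely by the star K_{1,n-1}, with maximum value (n−1)^2 + (n−1) = n(n−1). -/

import Mathlib

open scoped Classical
open Finset SimpleGraph

def starGraph (n : ℕ) : SimpleGraph (Fin n) :=
  SimpleGraph.fromRel (fun a _ => (a : ℕ) = 0)

/-!
In a tree on `N ≥ 2` vertices every degree `d` lies in `[1, N - 1]`, so
`(d - 1) (N - 1 - d) ≥ 0`, i.e. `d² + (N - 1) ≤ N d`. Summing against `∑ d = 2 (N - 1)` gives
`∑ d² ≤ N (N - 1)`, with equality iff every degree is `1` or `N - 1`. Not all degrees can be `1`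
unless `N = 2`, so equality forces a universal vertex `r`; and a tree with a universal vertex `r`
is the star at `r`, because that star is already a maximal acyclic graph.
-/

lemma sq_add_le_succ_mul {d m : ℕ} (h₁ : 1 ≤ d) (h₂ : d ≤ m) : d ^ 2 + m ≤ (m + 1) * d := by
  nlinarith

lemma sq_add_eq_succ_mul_iff {d m : ℕ} : d ^ 2 + m = (m + 1) * d ↔ d = 1 ∨ d = m := by
  rw [← @Nat.cast_inj ℤ, ← sub_eq_zero]
  push_cast
  rw [show (d : ℤ) ^ 2 + m - (m + 1) * d = -((d - 1) * (m - d)) by ring, neg_eq_zero,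
    mul_eq_zero, sub_eq_zero, sub_eq_zero, eq_comm (a := (m : ℤ))]
  norm_cast

namespace SimpleGraph

variable {V W : Type*}

lemma IsAcyclic.eq_starGraph_of_isUniversal {G : SimpleGraph V} {r : V} (hG : G.IsAcyclic)
    (hr : G.IsUniversal r) : G = starGraph r :=
  have : Nonempty V := ⟨r⟩
  (maximal_isAcyclic_iff_isTree.mpr (isTree_starGraph r)).eq_of_ge hG fun v w hvw => by
    obtain ⟨hne, rfl | rfl⟩ := starGraph_adj.mp hvw
    exacts [hr hne, (hr hne.symm).symm]

protected def Iso.starGraph (e : V ≃ W) {r : V} {r' : W} (h : e r = r') :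
    SimpleGraph.starGraph r ≃g SimpleGraph.starGraph r' where
  toEquiv := e
  map_rel_iff' := by subst h; simp

lemma IsAcyclic.nonempty_iso_starGraph_iff [DecidableEq V] {G : SimpleGraph V} (hG : G.IsAcyclic)
    (r₀ : V) : Nonempty (G ≃g SimpleGraph.starGraph r₀) ↔ ∃ r, G.IsUniversal r := by
  constructor
  · rintro ⟨e⟩
    refine ⟨e.symm r₀, fun w hw => ?_⟩
    rw [← e.symm_apply_apply w, e.symm.map_adj_iff, starGraph_adj]
    exact ⟨fun h => hw (e.symm_apply_eq.mpr h), .inl rfl⟩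
  · rintro ⟨r, hr⟩
    rw [hG.eq_starGraph_of_isUniversal hr]
    exact ⟨Iso.starGraph (Equiv.swap r r₀) (Equiv.swap_apply_left r r₀)⟩

variable [Fintype V] {G : SimpleGraph V} [DecidableRel G.Adj]

lemma IsTree.sum_degrees (hG : G.IsTree) : ∑ v, G.degree v = 2 * (Fintype.card V - 1) := by
  rw [G.sum_degrees_eq_twice_card_edges, ← hG.card_edgeFinset, Nat.add_sub_cancel]

lemma IsTree.degree_sq_add_le (hG : G.IsTree) (v : V) :
    G.degree v ^ 2 + (Fintype.card V - 1) ≤ Fintype.card V * G.degree v := by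
  have hle := G.degree_le_card_edgeFinset v
  have hcard := hG.card_edgeFinset
  rw [← hcard, Nat.add_sub_cancel]
  rcases Nat.eq_zero_or_pos #G.edgeFinset with hE | hE
  · simp [hE, Nat.eq_zero_of_le_zero (hE ▸ hle :)]
  · have : Nontrivial V := Fintype.one_lt_card_iff_nontrivial.mp (by omega)
    exact sq_add_le_succ_mul (hG.connected.preconnected.degree_pos_of_nontrivial v) hle

lemma IsTree.sum_degree_sq_le (hG : G.IsTree) :
    ∑ v, G.degree v ^ 2 ≤ Fintype.card V * (Fintype.card V - 1) := by
  have h := sum_le_sum fun v (_ : v ∈ univ) => hG.degree_sq_add_le v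
  rw [sum_add_distrib, sum_const, card_univ, smul_eq_mul, ← mul_sum, hG.sum_degrees] at h
  linarith

lemma IsTree.sum_degree_sq_eq_iff (hG : G.IsTree) :
    ∑ v, G.degree v ^ 2 = Fintype.card V * (Fintype.card V - 1) ↔
      ∀ v, G.degree v = 1 ∨ G.degree v = Fintype.card V - 1 := by
  have h := sum_eq_sum_iff_of_le fun v (_ : v ∈ univ) => hG.degree_sq_add_le v
  rw [sum_add_distrib, sum_const, card_univ, smul_eq_mul, ← mul_sum, hG.sum_degrees,
    mul_left_comm, two_mul, add_left_inj] at h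
  rw [h, ← hG.card_edgeFinset, Nat.add_sub_cancel]
  simp only [mem_univ, true_implies, sq_add_eq_succ_mul_iff]

lemma IsTree.forall_degree_eq_one_or_iff_exists_isUniversal (hG : G.IsTree) :
    (∀ v, G.degree v = 1 ∨ G.degree v = Fintype.card V - 1) ↔ ∃ r, G.IsUniversal r := by
  simp_rw [degree_eq_card_sub_one]
  constructor
  · intro h
    by_contra! hnone
    have hone : ∀ v, G.degree v = 1 := fun v => (h v).resolve_right (hnone v)
    have hsum := hG.sum_degrees
    simp only [hone, sum_const, card_univ, smul_eq_mul, mul_one] at hsum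
    obtain ⟨v⟩ := hG.connected.nonempty
    have := Fintype.card_pos_iff.mpr ⟨v⟩
    exact hnone v (by rw [← degree_eq_card_sub_one, hone]; omega)
  · rintro ⟨r, hr⟩ v
    rcases eq_or_ne v r with rfl | hv
    · exact .inr hr
    · left
      obtain rfl := hG.isAcyclic.eq_starGraph_of_isUniversal hr
      convert degree_starGraph_of_ne_center hv

end SimpleGraph

lemma starGraph_eq_starGraph_zero (n : ℕ) [NeZero n] :
    _root_.starGraph n = SimpleGraph.starGraph (0 : Fin n) := by
  ext a b
  simp only [_root_.starGraph, SimpleGraph.starGraph, fromRel_adj, Fin.val_eq_zero_iff]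

theorem star_maximizes_S2_general (n : ℕ) (T : SimpleGraph (Fin n))
    (hT : T.IsTree) :
    (∑ v : Fin n, T.degree v ^ 2 ≤ n * (n - 1)) ∧
      ((∑ v : Fin n, T.degree v ^ 2 = n * (n - 1)) ↔ Nonempty (T ≃g _root_.starGraph n)) := by
  have : NeZero n := ⟨fun hn => (hn ▸ hT.connected.nonempty).elim Fin.elim0⟩
  refine ⟨by simpa using hT.sum_degree_sq_le, ?_⟩
  rw [starGraph_eq_starGraph_zero, hT.isAcyclic.nonempty_iso_starGraph_iff,
    ← hT.forall_degree_eq_one_or_iff_exists_isUniversal, ← hT.sum_degree_sq_eq_iff,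
    Fintype.card_fin]

/-- Among trees on n ≥ 2 vertices, S₂(T) = Σ deg(v)² is maximized uniquely (up to
isomorphism) by the star, with maximum value n(n-1). -/
theorem star_maximizes_S2 (n : ℕ) (hn : 2 ≤ n) (T : SimpleGraph (Fin n))
    (hT : T.IsTree) :
    (∑ v : Fin n, T.degree v ^ 2 ≤ n * (n - 1)) ∧
      ((∑ v : Fin n, T.degree v ^ 2 = n * (n - 1)) ↔ Nonempty (T ≃g _root_.starGraph n)) :=
  star_maximizes_S2_general n T hT
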